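/- arXiv:1205.0456 — 2 statements merged into one kernel-verified Lean document; each statement's English description precedes it below -/
import Mathlib

section
/- For two monomials x^α, x^β of the same degree r in K[x_0,...,x_n], x^α is greater than or equal to x^β in the Borel partial order if and only if for every i = 0,...,n the partial sum Σ_{j=i}^n (α_j - β_j) is nonnegative. -/
open MvPolynomial Filter

noncomputable section

/-- The Hilbert function of `K[x_0,...,x_{m-1}]/I` in degree `t`. -/
def hilb {K : Type*} [Field K] (m : ℕ) (I : Ideal (MvPolynomial (Fin m) K)) (t : ℕ) : ℤ :=
  (Module.finrank K (MvPolynomial.homogeneousSubmodule (Fin m) K t) : ℤ) -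
  (Module.finrank K
    (Submodule.restrictScalars K
        (I : Submodule (MvPolynomial (Fin m) K) (MvPolynomial (Fin m) K)) ⊓
      MvPolynomial.homogeneousSubmodule (Fin m) K t :
        Submodule K (MvPolynomial (Fin m) K)) : ℤ)

/-- Saturation of `I` w.r.t. the irrelevant ideal: `I^sat = ⋃_k (I : (x_0,...,x_{m-1})^k)`. -/
def sat {K : Type*} [Field K] (m : ℕ) (I : Ideal (MvPolynomial (Fin m) K)) :
    Ideal (MvPolynomial (Fin m) K) :=
  ⨆ k : ℕ, Submodule.colon
    (I : Submodule (MvPolynomial (Fin m) K) (MvPolynomial (Fin m) K))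
    (((Ideal.span (Set.range X)) ^ k : Ideal (MvPolynomial (Fin m) K)) :
      Submodule (MvPolynomial (Fin m) K) (MvPolynomial (Fin m) K))

/-- The combinatorial Borel condition: `x^α ∈ I`, `x_i ∣ x^α`, `j > i` implies
`(x_j/x_i)·x^α ∈ I` (variables ordered `x_{m-1} > ... > x_0`). -/
def borelCond {K : Type*} [Field K] (m : ℕ) (I : Ideal (MvPolynomial (Fin m) K)) : Prop :=
  ∀ α : Fin m →₀ ℕ, monomial α (1:K) ∈ I → ∀ i j : Fin m, i < j → α i ≠ 0 →
    monomial (α - Finsupp.single i 1 + Finsupp.single j 1) (1:K) ∈ I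

/-- `I` is a monomial ideal. -/
def isMonomialIdeal {K : Type*} [Field K] (m : ℕ) (I : Ideal (MvPolynomial (Fin m) K)) : Prop :=
  ∃ S : Set (Fin m →₀ ℕ), I = Ideal.span ((fun α => monomial α (1:K)) '' S)

/-- Increasing elementary Borel move on exponent vectors: `β = (x_{i+1}/x_i)·α`. -/
def stepUp (n : ℕ) (α β : Fin (n+1) →₀ ℕ) : Prop :=
  ∃ i : Fin n, α i.castSucc ≠ 0 ∧
    β = α - Finsupp.single i.castSucc 1 + Finsupp.single i.succ 1

/-- Borel partial order: `borelGE n α β` means `α ≥_B β`. -/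
def borelGE (n : ℕ) (α β : Fin (n+1) →₀ ℕ) : Prop :=
  Relation.ReflTransGen (stepUp n) β α

/-- Rational binomial coefficient `C(x, k) = x(x-1)...(x-k+1)/k!`. -/
def qchoose (x : ℚ) (k : ℕ) : ℚ := (∏ i ∈ Finset.range k, (x - i)) / (Nat.factorial k)

/-- `Σ_{i=0}^{r-1} C(t + a_i - i, a_i)` for a list `l = [a_0, ..., a_{r-1}]`. -/
def gsum (l : List ℕ) (t : ℚ) : ℚ :=
  (l.zipIdx.map (fun q => qchoose (t + (q.1 : ℚ) - (q.2 : ℚ)) q.1)).sum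

/-- First difference operator on polynomials: `Δq(t) = q(t) - q(t-1)`. -/
def dlt (q : Polynomial ℚ) : Polynomial ℚ := q - q.comp (Polynomial.X - 1)

/-!
Compare monomials through their tail sums `T_γ(k) = γ_k + ⋯ + γ_n`. The move
`x^β ↦ (x_{i+1}/x_i) x^β` raises `T_β(i+1)` by one and fixes every other tail sum, so the
tail sums only grow along the Borel order. Conversely, if `T_β ≤ T_α` with equal total degree
and `β ≠ α`, let `i + 1` be the first index with `T_β(i+1) < T_α(i+1)`: then
`T_β(i) = T_α(i) ≥ T_α(i+1) > T_β(i+1)`, so `x_i ∣ x^β` and the move at `i` keeps `T_β ≤ T_α`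
while shrinking `∑ₖ (T_α(k) - T_β(k))`.
-/

def tailSum {n : ℕ} (γ : Fin (n+1) →₀ ℕ) (k : Fin (n+1)) : ℕ := ∑ j ∈ Finset.Ici k, γ j

section TailSum

variable {n : ℕ}

theorem tailSum_zero (γ : Fin (n+1) →₀ ℕ) : tailSum γ 0 = ∑ j, γ j := by
  rw [tailSum, ← bot_eq_zero, Finset.Ici_bot]

theorem tailSum_last (γ : Fin (n+1) →₀ ℕ) : tailSum γ (Fin.last n) = γ (Fin.last n) := by
  rw [tailSum, ← Fin.top_eq_last, Finset.Ici_top, Finset.sum_singleton]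

theorem tailSum_castSucc (γ : Fin (n+1) →₀ ℕ) (i : Fin n) :
    tailSum γ i.castSucc = γ i.castSucc + tailSum γ i.succ := by
  have hIci : Finset.Ici i.castSucc = insert i.castSucc (Finset.Ici i.succ) := by
    ext j
    simp only [Finset.mem_Ici, Finset.mem_insert, Fin.le_iff_val_le_val, Fin.ext_iff,
      Fin.val_succ, Fin.val_castSucc]
    omega
  rw [tailSum, hIci, Finset.sum_insert (by simp [Fin.le_iff_val_le_val]), tailSum]

theorem tailSum_add (γ δ : Fin (n+1) →₀ ℕ) (k : Fin (n+1)) :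
    tailSum (γ + δ) k = tailSum γ k + tailSum δ k :=
  Finset.sum_add_distrib

theorem tailSum_single_one (j k : Fin (n+1)) :
    tailSum (Finsupp.single j 1) k = if k ≤ j then 1 else 0 := by
  simp [tailSum, Finsupp.single_apply]

theorem eq_of_tailSum_eq {γ δ : Fin (n+1) →₀ ℕ} (h : ∀ k, tailSum γ k = tailSum δ k) :
    γ = δ := by
  ext j
  induction j using Fin.lastCases with
  | last => rw [← tailSum_last, ← tailSum_last, h]
  | cast i =>
    have hγ := tailSum_castSucc γ i
    have hδ := tailSum_castSucc δ i
    have := h i.castSucc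
    have := h i.succ
    omega

theorem tailSum_stepUp {β : Fin (n+1) →₀ ℕ} {i : Fin n} (hβ : β i.castSucc ≠ 0)
    (k : Fin (n+1)) :
    tailSum (β - Finsupp.single i.castSucc 1 + Finsupp.single i.succ 1) k
      = tailSum β k + if k = i.succ then 1 else 0 := by
  conv_rhs => rw [← Finsupp.sub_add_single_one_cancel hβ]
  simp only [tailSum_add, tailSum_single_one, Fin.le_iff_val_le_val, Fin.ext_iff,
    Fin.val_succ, Fin.val_castSucc]
  split_ifs <;> omega

theorem tailSum_le_of_borelGE {α β : Fin (n+1) →₀ ℕ} (h : borelGE n α β) (k : Fin (n+1)) :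
    tailSum β k ≤ tailSum α k := by
  induction h with
  | refl => rfl
  | tail _ hstep ih =>
    obtain ⟨i, hi, rfl⟩ := hstep
    rw [tailSum_stepUp hi]
    omega

theorem Fin.exists_not_castSucc_and_succ {p : Fin (n+1) → Prop} (h0 : ¬ p 0) {k : Fin (n+1)}
    (hk : p k) : ∃ i : Fin n, ¬ p i.castSucc ∧ p i.succ := by
  by_contra! hno
  exact Fin.induction h0 hno k hk

theorem exists_stepUp_index {α β : Fin (n+1) →₀ ℕ} (hle : ∀ k, tailSum β k ≤ tailSum α k)
    (h0 : tailSum β 0 = tailSum α 0) (hne : β ≠ α) :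
    ∃ i : Fin n, β i.castSucc ≠ 0 ∧ tailSum β i.succ < tailSum α i.succ := by
  obtain ⟨k, hk⟩ : ∃ k, tailSum β k < tailSum α k := by
    by_contra! hge
    exact hne (eq_of_tailSum_eq fun k => (hle k).antisymm (hge k))
  obtain ⟨i, hcast, hsucc⟩ :=
    Fin.exists_not_castSucc_and_succ (p := fun k => tailSum β k < tailSum α k) h0.not_lt hk
  refine ⟨i, ?_, hsucc⟩
  have hβ := tailSum_castSucc β i
  have hα := tailSum_castSucc α i
  omega

theorem borelGE_of_tailSum_le {α β : Fin (n+1) →₀ ℕ} (hle : ∀ k, tailSum β k ≤ tailSum α k)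
    (h0 : tailSum β 0 = tailSum α 0) : borelGE n α β := by
  obtain ⟨d, hd⟩ : ∃ d, ∑ k, tailSum β k + d = ∑ k, tailSum α k :=
    (Nat.exists_eq_add_of_le (Finset.sum_le_sum fun k _ => hle k)).imp fun _ => Eq.symm
  induction d generalizing β with
  | zero =>
    have heq := (Finset.sum_eq_sum_iff_of_le fun k _ => hle k).1 ((add_zero _).symm.trans hd)
    rw [eq_of_tailSum_eq fun k => (heq k (Finset.mem_univ k)).symm]
    exact .refl
  | succ d ih =>
    have hne : β ≠ α := by
      rintro rfl
      omega
    obtain ⟨i, hi, hlt⟩ := exists_stepUp_index hle h0 hne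
    have hT := tailSum_stepUp hi
    refine Relation.ReflTransGen.head ⟨i, hi, rfl⟩ (ih (fun k => ?_) ?_ ?_)
    · rw [hT]
      split_ifs with hk
      · exact hk ▸ hlt
      · simpa using hle k
    · rw [hT, if_neg (Fin.succ_ne_zero i).symm, h0, add_zero]
    · simp only [hT, Finset.sum_add_distrib, Finset.sum_ite_eq', Finset.mem_univ, if_true]
      omega

theorem borelGE_iff_forall_tailSum_le {α β : Fin (n+1) →₀ ℕ} (h : ∑ j, α j = ∑ j, β j) :
    borelGE n α β ↔ ∀ k, tailSum β k ≤ tailSum α k := by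
  refine ⟨tailSum_le_of_borelGE, fun hle => borelGE_of_tailSum_le hle ?_⟩
  rw [tailSum_zero, tailSum_zero, h]

end TailSum

/-- for monomials `x^α, x^β` of the same degree `r`,
`x^α ≥_B x^β` iff all partial sums `Σ_{j=i}^n (α_j - β_j)` are nonnegative. -/
theorem statement5 (n r : ℕ) (α β : Fin (n+1) →₀ ℕ)
    (hα : (∑ j, α j) = r) (hβ : (∑ j, β j) = r) :
    borelGE n α β ↔
      ∀ i : Fin (n+1), 0 ≤ ∑ j ∈ Finset.Ici i, ((α j : ℤ) - (β j : ℤ)) := by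
  rw [borelGE_iff_forall_tailSum_le (hα.trans hβ.symm)]
  refine forall_congr' fun i => ?_
  rw [Finset.sum_sub_distrib, sub_nonneg, tailSum, tailSum]
  exact_mod_cast Iff.rfl

end
end

section
/- Let B be a Borel set of degree-r monomials, x^β a Borel-minimal monomial of B divisible by x_0, and I the ideal generated by B \ {x^β}. Then the set of degree-(r+1) monomials in the ideal generated by B but not in I is exactly {x_0 · x^β}; equivalently, dim_K ⟨B⟩_{r+1} - dim_K I_{r+1} = 1. -/
open MvPolynomial Filter

noncomputable section

/-!
A monomial ideal is spanned, degree by degree, by the monomials it contains, so both claims say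
that `x_0 x^β` is the only degree-`(r+1)` multiple of `x^β` divisible by no other generator.
For `j > 0` the multiple `x_j x^β` is divisible by the generator `(x_j/x_0) x^β ∈ B`; and a
generator `x^α ≠ x^β` dividing `x_0 x^β` would satisfy `x_0 x^β = x_j x^α` with `j > 0`, so that
`x^β = (x_j/x_0) x^α` lies above `x^α` in the Borel order, against the minimality of `x^β`.
-/

namespace MvPolynomial

variable {σ R : Type*}

def multiplesOfDegree (S : Set (σ →₀ ℕ)) (d : ℕ) : Set (σ →₀ ℕ) :=
  {γ | γ.degree = d ∧ ∃ α ∈ S, α ≤ γ}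

theorem multiplesOfDegree_mono {S T : Set (σ →₀ ℕ)} (h : S ⊆ T) (d : ℕ) :
    multiplesOfDegree S d ⊆ multiplesOfDegree T d :=
  fun _ ⟨hγ, α, hα, hle⟩ => ⟨hγ, α, h hα, hle⟩

theorem finite_multiplesOfDegree [Finite σ] (S : Set (σ →₀ ℕ)) (d : ℕ) :
    (multiplesOfDegree S d).Finite :=
  (Finsupp.finite_of_degree_eq d).subset fun _ hγ => hγ.1

theorem monomial_one_mem_ideal_span_monomial_one_iff [CommSemiring R] [Nontrivial R]
    {γ : σ →₀ ℕ} {S : Set (σ →₀ ℕ)} :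
    monomial γ (1 : R) ∈ Ideal.span ((fun α => monomial α (1 : R)) '' S) ↔ ∃ α ∈ S, α ≤ γ := by
  classical
  simp [mem_ideal_span_monomial_image, support_monomial]

theorem restrictScalars_ideal_span_monomial_inf_homogeneousSubmodule [CommSemiring R]
    (S : Set (σ →₀ ℕ)) (d : ℕ) :
    (Ideal.span ((fun α => monomial α (1 : R)) '' S)).restrictScalars R ⊓
        homogeneousSubmodule σ R d = restrictSupport R (multiplesOfDegree S d) := by
  ext p
  simp only [Submodule.mem_inf, Submodule.restrictScalars_mem, mem_ideal_span_monomial_image,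
    homogeneousSubmodule_eq_finsupp_supported, AddMonoidAlgebra.mem_supported,
    mem_restrictSupport_iff, multiplesOfDegree, Set.subset_def, Finset.mem_coe, Set.mem_ofPred_eq]
  exact ⟨fun ⟨hS, hd⟩ γ hγ => ⟨hd γ hγ, hS γ hγ⟩, fun h => ⟨fun γ hγ => (h γ hγ).2,
    fun γ hγ => (h γ hγ).1⟩⟩

theorem finrank_restrictScalars_ideal_span_monomial_inf_homogeneousSubmodule [CommRing R]
    [Nontrivial R] (S : Set (σ →₀ ℕ)) (d : ℕ) :
    Module.finrank R ↥((Ideal.span ((fun α => monomial α (1 : R)) '' S)).restrictScalars R ⊓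
        homogeneousSubmodule σ R d) = (multiplesOfDegree S d).ncard := by
  rw [restrictScalars_ideal_span_monomial_inf_homogeneousSubmodule,
    Module.finrank_eq_nat_card_basis (basisRestrictSupport R _), Nat.card_coe_set_eq]

end MvPolynomial

theorem Finsupp.exists_eq_add_single_of_le {σ : Type*} {α γ : σ →₀ ℕ} (hle : α ≤ γ)
    (hdeg : γ.degree = α.degree + 1) : ∃ j, γ = α + single j 1 := by
  obtain ⟨c, rfl⟩ := le_iff_exists_add.mp hle
  have hc : c ∈ Set.range fun j => single j 1 := by
    rw [range_single_one]
    simpa using hdeg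
  obtain ⟨j, rfl⟩ := hc
  exact ⟨j, rfl⟩

section Borel

open Finsupp

variable {n : ℕ}

theorem borelGE_sub_single_add_single {α : Fin (n+1) →₀ ℕ} {i j : Fin (n+1)} (hij : i < j)
    (hi : α i ≠ 0) : borelGE n (α - single i 1 + single j 1) α := by
  induction j using Fin.induction with
  | zero => exact absurd hij (Fin.not_lt_zero i)
  | succ k ih =>
    rcases (Fin.le_castSucc_iff.mpr hij).eq_or_lt with rfl | hik
    · exact .single ⟨k, hi, rfl⟩
    · have hk : (α - single i 1 + single k.castSucc 1 : Fin (n+1) →₀ ℕ) k.castSucc ≠ 0 := by simp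
      refine (ih hik).tail ⟨k, hk, ?_⟩
      rw [add_tsub_cancel_right]

theorem mem_of_borelGE {B : Set (Fin (n+1) →₀ ℕ)} (hB : ∀ α ∈ B, ∀ γ, stepUp n α γ → γ ∈ B)
    {α γ : Fin (n+1) →₀ ℕ} (hα : α ∈ B) (h : borelGE n γ α) : γ ∈ B := by
  induction h with
  | refl => exact hα
  | tail _ hstep ih => exact hB _ ih _ hstep

variable {B : Set (Fin (n+1) →₀ ℕ)} {β : Fin (n+1) →₀ ℕ} {r : ℕ}

theorem eq_of_mem_of_le_add_single_zero (hdeg : ∀ α ∈ B, α.degree = r) (hβ : β ∈ B)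
    (hmin : ∀ γ ∈ B, borelGE n β γ → γ = β) {α : Fin (n+1) →₀ ℕ} (hα : α ∈ B)
    (hle : α ≤ β + single 0 1) : α = β := by
  obtain ⟨j, hj⟩ := exists_eq_add_single_of_le hle (by simp [hdeg α hα, hdeg β hβ])
  rcases eq_or_ne j 0 with rfl | hj0
  · exact (add_right_cancel hj).symm
  · have hα0 : α 0 = β 0 + 1 := by simpa [hj0] using (DFunLike.congr_fun hj 0).symm
    have hαβ : α - single 0 1 + single j 1 = β := by
      rw [tsub_add_eq_add_tsub (single_le_iff.mpr (by omega)), ← hj, add_tsub_cancel_right]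
    exact hmin α hα (hαβ ▸ borelGE_sub_single_add_single (Fin.pos_of_ne_zero hj0) (by omega))

theorem eq_add_single_zero_of_le (hB : ∀ α ∈ B, ∀ γ, stepUp n α γ → γ ∈ B) (hβ : β ∈ B)
    (h0 : β 0 ≠ 0) {γ : Fin (n+1) →₀ ℕ} (hγ : γ.degree = β.degree + 1) (hβγ : β ≤ γ)
    (hother : ∀ α ∈ B \ {β}, ¬ α ≤ γ) : γ = β + single 0 1 := by
  obtain ⟨j, rfl⟩ := exists_eq_add_single_of_le hβγ hγ
  rcases eq_or_ne j 0 with rfl | hj0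
  · rfl
  · -- moving one factor `x_0` of `x^β` to `x_j` gives another generator dividing `x_j x^β`
    set β' := β - single 0 1 + single j 1
    have hβ' : β' ∈ B := mem_of_borelGE hB hβ (borelGE_sub_single_add_single
      (Fin.pos_of_ne_zero hj0) h0)
    have hne : β' ≠ β := fun h => by
      have := DFunLike.congr_fun h 0
      simp [β', hj0.symm] at this
      omega
    exact absurd (add_le_add_left tsub_le_self _) (hother β' ⟨hβ', hne⟩)

theorem multiplesOfDegree_diff_eq_singleton (hdeg : ∀ α ∈ B, α.degree = r)
    (hB : ∀ α ∈ B, ∀ γ, stepUp n α γ → γ ∈ B) (hβ : β ∈ B)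
    (hmin : ∀ γ ∈ B, borelGE n β γ → γ = β) (h0 : β 0 ≠ 0) :
    MvPolynomial.multiplesOfDegree B (r + 1) \ MvPolynomial.multiplesOfDegree (B \ {β}) (r + 1) =
      {β + single 0 1} := by
  ext γ
  simp only [MvPolynomial.multiplesOfDegree, Set.mem_sdiff, Set.mem_ofPred_eq,
    Set.mem_singleton_iff]
  constructor
  · rintro ⟨⟨hγ, α, hα, hαγ⟩, hno⟩
    obtain rfl : α = β := by_contra fun hne => hno ⟨hγ, α, ⟨hα, hne⟩, hαγ⟩
    exact eq_add_single_zero_of_le hB hα h0 (by rw [hγ, hdeg α hα]) hαγ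
      fun α' hα' hle => hno ⟨hγ, α', hα', hle⟩
  · rintro rfl
    refine ⟨⟨by simp [hdeg β hβ], β, hβ, le_self_add⟩, fun ⟨_, α, ⟨hα, hne⟩, hle⟩ => hne ?_⟩
    exact eq_of_mem_of_le_add_single_zero hdeg hβ hmin hα hle

end Borel

theorem statement13_general {K : Type*} [Field K] (n r : ℕ)
    (B : Finset (Fin (n+1) →₀ ℕ))
    (hdeg : ∀ α ∈ B, (∑ j, α j) = r)
    (hclosed : ∀ α ∈ B, ∀ γ, stepUp n α γ → γ ∈ B)
    (β : Fin (n+1) →₀ ℕ) (hβ : β ∈ B)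
    (hmin : ∀ γ ∈ B, borelGE n β γ → γ = β)
    (h0 : β 0 ≠ 0)
    (I : Ideal (MvPolynomial (Fin (n+1)) K))
    (hI : I = Ideal.span ((fun γ => monomial γ (1:K)) '' (B.erase β : Finset _))) :
    {γ : Fin (n+1) →₀ ℕ | (∑ j, γ j) = r + 1 ∧
        monomial γ (1:K) ∈ Ideal.span ((fun γ => monomial γ (1:K)) '' (B : Finset _)) ∧
        monomial γ (1:K) ∉ I} = {β + Finsupp.single 0 1} ∧
    (Module.finrank K
        (Submodule.restrictScalars K
            ((Ideal.span ((fun γ => monomial γ (1:K)) '' (B : Finset _)) :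
                Ideal (MvPolynomial (Fin (n+1)) K)) :
              Submodule (MvPolynomial (Fin (n+1)) K) (MvPolynomial (Fin (n+1)) K)) ⊓
          MvPolynomial.homogeneousSubmodule (Fin (n+1)) K (r+1) :
            Submodule K (MvPolynomial (Fin (n+1)) K)) : ℤ)
      - (Module.finrank K
        (Submodule.restrictScalars K
            (I : Submodule (MvPolynomial (Fin (n+1)) K) (MvPolynomial (Fin (n+1)) K)) ⊓
          MvPolynomial.homogeneousSubmodule (Fin (n+1)) K (r+1) :
            Submodule K (MvPolynomial (Fin (n+1)) K)) : ℤ) = 1 := by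
  subst hI
  have hdegB : ∀ α ∈ (B : Set (Fin (n+1) →₀ ℕ)), α.degree = r := fun α hα => by
    rw [Finsupp.degree_eq_sum, hdeg α hα]
  have hdiff : multiplesOfDegree (B : Set (Fin (n+1) →₀ ℕ)) (r + 1) \
      multiplesOfDegree ↑(B.erase β) (r + 1) = {β + Finsupp.single 0 1} := by
    rw [Finset.coe_erase]
    exact multiplesOfDegree_diff_eq_singleton hdegB hclosed hβ hmin h0
  constructor
  · rw [← hdiff]
    ext γ
    simp only [multiplesOfDegree, monomial_one_mem_ideal_span_monomial_one_iff,
      Finsupp.degree_eq_sum, Set.mem_sdiff, Set.mem_ofPred_eq]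
    exact ⟨fun ⟨hγ, hmem, hnot⟩ => ⟨⟨hγ, hmem⟩, fun h => hnot h.2⟩,
      fun ⟨⟨hγ, hmem⟩, hnot⟩ => ⟨hγ, hmem, fun h => hnot ⟨hγ, h⟩⟩⟩
  · rw [finrank_restrictScalars_ideal_span_monomial_inf_homogeneousSubmodule,
      finrank_restrictScalars_ideal_span_monomial_inf_homogeneousSubmodule,
      ← Set.ncard_sdiff_add_ncard_of_subset (multiplesOfDegree_mono (Finset.coe_subset.mpr
        (Finset.erase_subset β B)) _) (finite_multiplesOfDegree _ _), hdiff, Set.ncard_singleton]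
    push_cast
    ring

/-- for a Borel set `B`, a Borel-minimal `x^β ∈ B` divisible by `x_0`,
and `I = ⟨B \ {x^β}⟩`, the degree-`(r+1)` monomials in `⟨B⟩` but not in `I` are
exactly `{x_0·x^β}`; equivalently `dim_K ⟨B⟩_{r+1} - dim_K I_{r+1} = 1`. -/
theorem statement13 {K : Type*} [Field K] [CharZero K] (n r : ℕ)
    (B : Finset (Fin (n+1) →₀ ℕ))
    (hdeg : ∀ α ∈ B, (∑ j, α j) = r)
    (hclosed : ∀ α ∈ B, ∀ γ, stepUp n α γ → γ ∈ B)
    (β : Fin (n+1) →₀ ℕ) (hβ : β ∈ B)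
    (hmin : ∀ γ ∈ B, borelGE n β γ → γ = β)
    (h0 : β 0 ≠ 0)
    (I : Ideal (MvPolynomial (Fin (n+1)) K))
    (hI : I = Ideal.span ((fun γ => monomial γ (1:K)) '' (B.erase β : Finset _))) :
    {γ : Fin (n+1) →₀ ℕ | (∑ j, γ j) = r + 1 ∧
        monomial γ (1:K) ∈ Ideal.span ((fun γ => monomial γ (1:K)) '' (B : Finset _)) ∧
        monomial γ (1:K) ∉ I} = {β + Finsupp.single 0 1} ∧
    (Module.finrank K
        (Submodule.restrictScalars K
            ((Ideal.span ((fun γ => monomial γ (1:K)) '' (B : Finset _)) :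
                Ideal (MvPolynomial (Fin (n+1)) K)) :
              Submodule (MvPolynomial (Fin (n+1)) K) (MvPolynomial (Fin (n+1)) K)) ⊓
          MvPolynomial.homogeneousSubmodule (Fin (n+1)) K (r+1) :
            Submodule K (MvPolynomial (Fin (n+1)) K)) : ℤ)
      - (Module.finrank K
        (Submodule.restrictScalars K
            (I : Submodule (MvPolynomial (Fin (n+1)) K) (MvPolynomial (Fin (n+1)) K)) ⊓
          MvPolynomial.homogeneousSubmodule (Fin (n+1)) K (r+1) :
            Submodule K (MvPolynomial (Fin (n+1)) K)) : ℤ) = 1 :=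
  statement13_general n r B hdeg hclosed β hβ hmin h0 I hI
end
end
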